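/- Let t ≥ 1, σ_n > 0, let x_1,…,x_t be training points and z a test point in a set X, and let k : X × X → ℝ be symmetric with all finite Gram matrices positive semidefinite. For s ∈ {t−1, t}, let K_s be the s×s Gram matrix of x_1,…,x_s and for points u, v define the posterior covariance Σ_s(u,v) = k(u,v) − k_s(u)ᵀ (K_s + σ_n² I_s)⁻¹ k_s(v), where k_s(u) = (k(u,x_1),…,k(u,x_s))ᵀ, and write σ_s²(u) = Σ_s(u,u). Then the posterior variance satisfies the rank-one update identity σ_t²(z) = σ_{t−1}²(z) − Σ_{t−1}(z, x_t)² / (σ_n² + σ_{t−1}²(x_t)), where the denominator σ_n² + σ_{t−1}²(x_t) is strictly positive. -/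

import Mathlib

open Matrix

/-- The Gram matrix of a kernel `k` at points `p`. -/
def gramMat {X : Type*} (k : X → X → ℝ) {n : ℕ} (p : Fin n → X) :
    Matrix (Fin n) (Fin n) ℝ := fun i j => k (p i) (p j)

/-- The vector of kernel values between a point `u` and the training points `p`. -/
def kvec {X : Type*} (k : X → X → ℝ) {n : ℕ} (p : Fin n → X) (u : X) : Fin n → ℝ :=
  fun i => k u (p i)

/-- The GP posterior covariance between points `u` and `v` after observing at the
points `p` with noise standard deviation `σn`. -/
noncomputable def postCov {X : Type*} (k : X → X → ℝ) (σn : ℝ) {n : ℕ}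
    (p : Fin n → X) (u v : X) : ℝ :=
  k u v - kvec k p u ⬝ᵥ ((gramMat k p + σn ^ 2 • (1 : Matrix (Fin n) (Fin n) ℝ))⁻¹ *ᵥ
    kvec k p v)

lemma posDef_submatrix_equiv {m n : Type*} [Fintype m] [Fintype n] [DecidableEq m]
    [DecidableEq n] {M : Matrix n n ℝ} (hM : M.PosDef) (e : m ≃ n) :
    (M.submatrix e e).PosDef := by
  refine posDef_iff_dotProduct_mulVec.mpr ⟨?_, fun v hv => ?_⟩
  · show (M.submatrix e e)ᴴ = _
    rw [conjTranspose_submatrix, hM.1.eq]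
  · rw [Matrix.submatrix_mulVec_equiv M v e e]
    have hv' : v ∘ e.symm ≠ 0 := by
      intro h
      apply hv
      funext i
      simpa using congrFun h (e i)
    have h2 := hM.dotProduct_mulVec_pos hv'
    have heq : (star v ∘ e.symm) ⬝ᵥ (M *ᵥ (v ∘ e.symm)) =
        star v ⬝ᵥ ((M *ᵥ (v ∘ e.symm)) ∘ ⇑e) :=
      comp_equiv_symm_dotProduct _ _ _
    rw [← heq]
    exact h2

/-- Rank-one update identity for the GP posterior variance: incorporating the `t`-th
observation at `x_t` updates the posterior variance at any point `z` via
`σ_t²(z) = σ_{t−1}²(z) − Σ_{t−1}(z,x_t)² / (σₙ² + σ_{t−1}²(x_t))`, with the denominator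
strictly positive. -/
theorem postVar_rank_one_update {X : Type*} (k : X → X → ℝ)
    (hsymm : ∀ a b : X, k a b = k b a)
    (hPSD : ∀ (n : ℕ) (p : Fin n → X), (gramMat k p).PosSemidef)
    (σn : ℝ) (hσ : 0 < σn) (t : ℕ) (ht : 1 ≤ t) (x : Fin t → X) (z : X) :
    letI prev : Fin (t - 1) → X := fun i => x (Fin.castLE (Nat.sub_le t 1) i)
    letI xt : X := x ⟨t - 1, by omega⟩
    0 < σn ^ 2 + postCov k σn prev xt xt ∧
      postCov k σn x z z =
        postCov k σn prev z z -
          (postCov k σn prev z xt) ^ 2 / (σn ^ 2 + postCov k σn prev xt xt) := by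
  obtain ⟨n, rfl⟩ : ∃ n, t = n + 1 := ⟨t - 1, by omega⟩
  have main : ∀ (prev : Fin n → X) (xt : X),
      prev = (fun i => x (Fin.castLE (by omega) i)) → xt = x ⟨n, by omega⟩ →
      0 < σn ^ 2 + postCov k σn prev xt xt ∧
      postCov k σn x z z =
        postCov k σn prev z z -
          (postCov k σn prev z xt) ^ 2 / (σn ^ 2 + postCov k σn prev xt xt) := by
    intro prev xt hprev hxt
    -- basic abbreviations
    set A : Matrix (Fin n) (Fin n) ℝ :=
      gramMat k prev + σn ^ 2 • (1 : Matrix (Fin n) (Fin n) ℝ) with hAdef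
    set b : Fin n → ℝ := kvec k prev xt with hbdef
    set a : Fin n → ℝ := kvec k prev z with hadef
    set d : ℝ := k z xt with hddef
    have hpc : ∀ u v : X, postCov k σn prev u v =
        k u v - kvec k prev u ⬝ᵥ (A⁻¹ *ᵥ kvec k prev v) := fun u v => rfl
    -- positive definiteness of A
    have hsm : (σn ^ 2 • (1 : Matrix (Fin n) (Fin n) ℝ)).PosDef := by
      rw [smul_one_eq_diagonal]
      exact Matrix.posDef_diagonal_iff.mpr fun _ => by positivity
    have hA : A.PosDef := Matrix.PosDef.posSemidef_add (hPSD n prev) hsm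
    haveI iA : Invertible A := hA.isUnit.invertible
    have hAi : ⅟A = A⁻¹ := invOf_eq_nonsing_inv A
    have hAAinv : A * A⁻¹ = 1 :=
      Matrix.mul_nonsing_inv A (A.isUnit_iff_isUnit_det.mp hA.isUnit)
    -- symmetry of A⁻¹
    have hAT : Aᵀ = A := by
      rw [hAdef]
      ext i j
      simp [gramMat, Matrix.one_apply, hsymm (prev j) (prev i), eq_comm]
    have hdsymm : ∀ u v : Fin n → ℝ, u ⬝ᵥ (A⁻¹ *ᵥ v) = v ⬝ᵥ (A⁻¹ *ᵥ u) := by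
      intro u v
      rw [Matrix.dotProduct_mulVec, ← Matrix.mulVec_transpose,
        Matrix.transpose_nonsing_inv, hAT, dotProduct_comm]
    -- the big matrix and its block decomposition
    set Mbig : Matrix (Fin (n+1)) (Fin (n+1)) ℝ :=
      gramMat k x + σn ^ 2 • (1 : Matrix (Fin (n+1)) (Fin (n+1)) ℝ) with hMdef
    have hsmb : (σn ^ 2 • (1 : Matrix (Fin (n+1)) (Fin (n+1)) ℝ)).PosDef := by
      rw [smul_one_eq_diagonal]
      exact Matrix.posDef_diagonal_iff.mpr fun _ => by positivity
    have hMpd : Mbig.PosDef := Matrix.PosDef.posSemidef_add (hPSD (n+1) x) hsmb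
    set e : Fin n ⊕ Fin 1 ≃ Fin (n+1) := finSumFinEquiv with hedef
    have hel : ∀ i : Fin n, x (e (Sum.inl i)) = prev i := by
      intro i
      rw [hprev]
      congr 1 <;> simp [hedef, Fin.ext_iff]
    have her : ∀ j : Fin 1, x (e (Sum.inr j)) = xt := by
      intro j
      rw [hxt]
      congr 1 <;> simp [hedef, Fin.ext_iff]
    set B : Matrix (Fin n) (Fin 1) ℝ := Matrix.of fun i _ => b i with hBdef
    set C : Matrix (Fin 1) (Fin n) ℝ := Matrix.of fun _ j => b j with hCdef
    set D : Matrix (Fin 1) (Fin 1) ℝ := Matrix.of fun _ _ => k xt xt + σn ^ 2 with hDdef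
    have hsub : Mbig.submatrix e e = fromBlocks A B C D := by
      ext i j
      have hone : ∀ p q : Fin n ⊕ Fin 1, (1 : Matrix (Fin (n+1)) (Fin (n+1)) ℝ) (e p) (e q)
          = if p = q then (1:ℝ) else 0 := by
        intro p q
        rw [Matrix.one_apply]
        simp
      cases i with
      | inl i =>
        cases j with
        | inl j =>
          simp only [submatrix_apply, hMdef, Matrix.add_apply, Matrix.smul_apply, gramMat,
            hone, smul_eq_mul, fromBlocks_apply₁₁, hAdef, Matrix.one_apply, hel]
          simp
        | inr j =>
          simp only [submatrix_apply, hMdef, Matrix.add_apply, Matrix.smul_apply, gramMat,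
            hone, smul_eq_mul, fromBlocks_apply₁₂, hBdef, Matrix.of_apply, hel, her, hbdef,
            kvec]
          try simp [hsymm xt (prev i)]
      | inr i =>
        cases j with
        | inl j =>
          simp only [submatrix_apply, hMdef, Matrix.add_apply, Matrix.smul_apply, gramMat,
            hone, smul_eq_mul, fromBlocks_apply₂₁, hCdef, Matrix.of_apply, hel, her, hbdef,
            kvec]
          simp
        | inr j =>
          simp only [submatrix_apply, hMdef, Matrix.add_apply, Matrix.smul_apply, gramMat,
            hone, smul_eq_mul, fromBlocks_apply₂₂, hDdef, Matrix.of_apply, her]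
          simp [Subsingleton.elim i j]
    have hFB : (fromBlocks A B C D).PosDef := hsub ▸ posDef_submatrix_equiv hMpd e
    -- small computations with the blocks
    have hBv : ∀ c : ℝ, B *ᵥ (fun _ => c) = c • b := by
      intro c
      funext i
      simp [hBdef, Matrix.mulVec, dotProduct, mul_comm]
    have hCv : ∀ v : Fin n → ℝ, C *ᵥ v = fun _ => b ⬝ᵥ v := by
      intro v
      funext j
      simp [hCdef, Matrix.mulVec, dotProduct]
    -- positivity of the denominator
    set s : ℝ := σn ^ 2 + postCov k σn prev xt xt with hsdef
    have hs_eq : s = (k xt xt + σn ^ 2) - b ⬝ᵥ (A⁻¹ *ᵥ b) := by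
      rw [hsdef, hpc xt xt]; ring
    have hspos : 0 < s := by
      set w : Fin n ⊕ Fin 1 → ℝ := Sum.elim (-(A⁻¹ *ᵥ b)) (fun _ => 1) with hwdef
      have hw : w ≠ 0 := by
        intro h
        have := congrFun h (Sum.inr 0)
        simp [hwdef] at this
      have hq := hFB.dotProduct_mulVec_pos hw
      have hstar : star w = w := by
        funext i
        simp
      rw [hstar] at hq
      have hcomp : (fromBlocks A B C D) *ᵥ w =
          Sum.elim (0 : Fin n → ℝ) (fun _ => (k xt xt + σn ^ 2) - b ⬝ᵥ (A⁻¹ *ᵥ b)) := by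
        rw [hwdef, fromBlocks_mulVec, Sum.elim_comp_inl, Sum.elim_comp_inr]
        funext ij
        cases ij with
        | inl i =>
          simp only [Sum.elim_inl, Matrix.mulVec_neg, Matrix.mulVec_mulVec, hAAinv,
            Matrix.one_mulVec, hBv, one_smul, Pi.add_apply, Pi.neg_apply, Pi.zero_apply]
          simp
        | inr j =>
          simp only [Sum.elim_inr, Matrix.mulVec_neg, hCv, Pi.add_apply, Pi.neg_apply]
          have hD1 : (D *ᵥ fun _ : Fin 1 => (1:ℝ)) j = k xt xt + σn ^ 2 := by
            simp [hDdef, Matrix.mulVec, dotProduct]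
          rw [hD1, dotProduct_neg]
          ring
      rw [hcomp, hwdef, sumElim_dotProduct_sumElim] at hq
      rw [hs_eq]
      simpa [dotProduct] using hq
    -- invertibility of the Schur complement
    have hS : D - C * ⅟A * B = Matrix.of (fun _ _ : Fin 1 => s) := by
      ext i j
      have : (C * ⅟A * B) i j = b ⬝ᵥ (A⁻¹ *ᵥ b) := by
        rw [hAi]
        simp only [Matrix.mul_apply, hBdef, hCdef, Matrix.of_apply, Matrix.mulVec, dotProduct,
          Finset.sum_mul, Finset.mul_sum, mul_assoc]
        rw [Finset.sum_comm]
      simp only [Matrix.sub_apply, this, hDdef, Matrix.of_apply, hs_eq]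
    haveI iS : Invertible (D - C * ⅟A * B) := by
      rw [hS]
      exact Matrix.invertibleOfIsUnitDet _
        (by rw [Matrix.det_fin_one]; exact isUnit_iff_ne_zero.mpr hspos.ne')
    have hSi : ⅟(D - C * ⅟A * B) = Matrix.of (fun _ _ : Fin 1 => s⁻¹) := by
      have h1 := mul_invOf_self (D - C * ⅟A * B)
      have hSentry : (D - C * ⅟A * B) 0 0 = s := by rw [hS]; rfl
      have h00 : s * (⅟(D - C * ⅟A * B)) 0 0 = 1 := by
        have h2 := congrFun (congrFun h1 0) 0
        rw [Matrix.mul_apply, Fin.sum_univ_one, hSentry, Matrix.one_apply_eq] at h2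
        exact h2
      have hval : (⅟(D - C * ⅟A * B)) 0 0 = s⁻¹ :=
        eq_inv_of_mul_eq_one_left (by rw [mul_comm]; exact h00)
      ext i j
      rw [Subsingleton.elim i 0, Subsingleton.elim j 0]
      simpa using hval
    haveI iFB : Invertible (fromBlocks A B C D) := fromBlocks₁₁Invertible A B C D
    have hinvFB : (fromBlocks A B C D)⁻¹ =
        fromBlocks (⅟A + ⅟A * B * ⅟(D - C * ⅟A * B) * C * ⅟A)
          (-(⅟A * B * ⅟(D - C * ⅟A * B))) (-(⅟(D - C * ⅟A * B) * C * ⅟A))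
          (⅟(D - C * ⅟A * B)) := by
      rw [← invOf_eq_nonsing_inv, invOf_fromBlocks₁₁_eq]
    -- transfer the quadratic form
    have hquad : ∀ (N : Matrix (Fin (n+1)) (Fin (n+1)) ℝ) (v w : Fin (n+1) → ℝ),
        v ⬝ᵥ (N *ᵥ w) = (v ∘ e) ⬝ᵥ ((N.submatrix e e) *ᵥ (w ∘ e)) := by
      intro N v w
      rw [Matrix.submatrix_mulVec_equiv]
      have h2 : (w ∘ e) ∘ e.symm = w := by funext i; simp
      rw [h2]
      exact (comp_equiv_dotProduct_comp_equiv _ _ e).symm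
    have hkv : (kvec k x z) ∘ e = Sum.elim a (fun _ => d) := by
      funext ij
      cases ij with
      | inl i => simp [kvec, hel, hadef]
      | inr j => simp [kvec, her, hddef]
    -- main computation
    set β : ℝ := a ⬝ᵥ (A⁻¹ *ᵥ b) with hβdef
    have hγ : b ⬝ᵥ (A⁻¹ *ᵥ a) = β := (hdsymm a b).symm
    have hq : kvec k x z ⬝ᵥ (Mbig⁻¹ *ᵥ kvec k x z) =
        a ⬝ᵥ (A⁻¹ *ᵥ a) + (d - β)^2 / s := by
      rw [hquad, hkv, ← Matrix.inv_submatrix_equiv, hsub, hinvFB, hSi, hAi, fromBlocks_mulVec,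
        Sum.elim_comp_inl, Sum.elim_comp_inr]
      have htop : (A⁻¹ + A⁻¹ * B * Matrix.of (fun _ _ : Fin 1 => s⁻¹) * C * A⁻¹) *ᵥ a +
          (-(A⁻¹ * B * Matrix.of (fun _ _ : Fin 1 => s⁻¹))) *ᵥ (fun _ => d) =
          A⁻¹ *ᵥ a + (s⁻¹ * (β - d)) • (A⁻¹ *ᵥ b) := by
        rw [Matrix.add_mulVec, Matrix.neg_mulVec]
        simp only [← Matrix.mulVec_mulVec]
        rw [hCv]
        have hSv : ∀ c : ℝ, Matrix.of (fun _ _ : Fin 1 => s⁻¹) *ᵥ (fun _ : Fin 1 => c)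
            = fun _ => s⁻¹ * c := by
          intro c
          funext j
          simp [Matrix.mulVec, dotProduct]
        rw [hSv, hSv, hγ, hBv, hBv, add_assoc]
        congr 1
        rw [Matrix.mulVec_smul, Matrix.mulVec_smul, ← neg_smul, ← add_smul]
        congr 1
        ring
      have hbot : (-(Matrix.of (fun _ _ : Fin 1 => s⁻¹) * C * A⁻¹)) *ᵥ a +
          (Matrix.of (fun _ _ : Fin 1 => s⁻¹)) *ᵥ (fun _ : Fin 1 => d) =
          fun _ => s⁻¹ * (d - β) := by
        rw [Matrix.neg_mulVec]
        simp only [← Matrix.mulVec_mulVec]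
        rw [hCv]
        simp only [hγ]
        have hSv : ∀ c : ℝ, Matrix.of (fun _ _ : Fin 1 => s⁻¹) *ᵥ (fun _ : Fin 1 => c)
            = fun _ => s⁻¹ * c := by
          intro c
          funext j
          simp [Matrix.mulVec, dotProduct]
        rw [hSv, hSv]
        funext j
        simp only [Pi.add_apply, Pi.neg_apply]
        ring
      rw [htop, hbot, sumElim_dotProduct_sumElim]
      rw [dotProduct_add, dotProduct_smul]
      have : (fun _ : Fin 1 => d) ⬝ᵥ (fun _ : Fin 1 => s⁻¹ * (d - β)) = d * (s⁻¹ * (d - β)) := by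
        simp [dotProduct]
      rw [this, hβdef]
      field_simp
      linear_combination ((a ⬝ᵥ (A⁻¹ *ᵥ b)) ^ 2 - (a ⬝ᵥ (A⁻¹ *ᵥ b)) * d) * (mul_inv_cancel₀ hspos.ne')
    refine ⟨hspos, ?_⟩
    have hgoal : postCov k σn x z z =
        k z z - kvec k x z ⬝ᵥ (Mbig⁻¹ *ᵥ kvec k x z) := rfl
    rw [hgoal, hq, hpc z z, hpc z xt]
    ring
  exact main _ _ rfl rfl
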